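/- arXiv:1303.3690 — 2 statements merged into one kernel-verified Lean document; each statement's English description precedes it below -/
import Mathlib

section
/- Upper bound for Bowen entropy of a product via packing entropy (main theorem, part 2): for any Z_1, Z_2 ⊆ X, h^B(Z_1 × Z_2) ≤ h^B(Z_1) + h^P(Z_2), where the product is taken in the product system. -/
/-!
Fix `s > h^B(Z₁)` and `t > h^P(Z₂)` and a scale `ε`. Cover `Z₂` by countably many pieces `Z₂ⁱ`
with `P^t_{ε/4}(Z₂ⁱ) < 1`. From some time `Mᵢ` on, an `(n, ε/4)`-net of `Z₂ⁱ` (a set whose closed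
Bowen `ε/4`-balls are disjoint) is a packing, so it has at most `e^{tn}` points, and a maximal one
yields a cover of `Z₂ⁱ` by at most `e^{tn}` Bowen balls `B_n(y, ε)`. Pairing these with a ball
`B_n(x, ε)` covers `B_n(x, ε) × Z₂ⁱ` at cost `e^{-sn}`, hence
`M^{s+t}_{N,ε}(Z₁ × Z₂ⁱ) ≤ M^s_{N,ε}(Z₁) = 0`, and countable subadditivity gives
`M^{s+t}(Z₁ × Z₂) = 0`.
-/

open Filter Set
open scoped ENNReal NNReal

namespace BowenProduct

variable {X : Type*} [PseudoMetricSpace X]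

/-- The open Bowen ball of order `n` and radius `ε` around `x`:
the ball for the `n`-th Bowen metric `d_n(x,y) = max_{0 ≤ k ≤ n-1} d(T^k x, T^k y)`. -/
def bowenBall (T : X → X) (n : ℕ) (x : X) (ε : ℝ) : Set X :=
  {y | ∀ k < n, dist (T^[k] x) (T^[k] y) < ε}

/-- The closed Bowen ball of order `n` and radius `ε` around `x`. -/
def bowenClosedBall (T : X → X) (n : ℕ) (x : X) (ε : ℝ) : Set X :=
  {y | ∀ k < n, dist (T^[k] x) (T^[k] y) ≤ ε}

/-- `M^s_{N,ε}(Z)`: the infimum of `Σ_i exp(-s n_i)` over all finite or countable families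
`{B_{n_i}(x_i, ε)}` with `x_i ∈ X`, `n_i ≥ N`, covering `Z`. -/
noncomputable def coverSum (T : X → X) (s : ℝ) (N : ℕ) (ε : ℝ) (Z : Set X) : ℝ≥0∞ :=
  ⨅ (F : Set (X × ℕ)) (_ : F.Countable) (_ : ∀ p ∈ F, N ≤ p.2)
    (_ : Z ⊆ ⋃ p ∈ F, bowenBall T p.2 p.1 ε),
    ∑' p : F, ENNReal.ofReal (Real.exp (-s * ((p : X × ℕ).2 : ℝ)))

/-- `M^s_ε(Z) = lim_{N → ∞} M^s_{N,ε}(Z)`; the limit exists and equals the supremum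
since `M^s_{N,ε}(Z)` does not decrease as `N` increases. -/
noncomputable def coverMeasureEps (T : X → X) (s ε : ℝ) (Z : Set X) : ℝ≥0∞ :=
  ⨆ N : ℕ, coverSum T s N ε Z

/-- `M^s(Z) = lim_{ε → 0} M^s_ε(Z)`; the limit exists and equals the supremum
since `M^s_ε(Z)` does not decrease as `ε` decreases. -/
noncomputable def coverMeasure (T : X → X) (s : ℝ) (Z : Set X) : ℝ≥0∞ :=
  ⨆ (ε : ℝ) (_ : 0 < ε), coverMeasureEps T s ε Z

/-- Bowen's topological entropy `h^B(Z)`: the critical value of `s ≥ 0` at which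
`M^s(Z)` jumps from `∞` to `0`, i.e. `inf {s ≥ 0 : M^s(Z) = 0}` (and `∞` if no such `s`). -/
noncomputable def bowenEntropy (T : X → X) (Z : Set X) : ℝ≥0∞ :=
  ⨅ (s : ℝ≥0) (_ : coverMeasure T (s : ℝ) Z = 0), (s : ℝ≥0∞)

/-- `P^s_{N,ε}(Z)`: the supremum of `Σ_i exp(-s n_i)` over all finite or countable pairwise
disjoint families `{B̄_{n_i}(x_i, ε)}` with `x_i ∈ Z`, `n_i ≥ N`. -/
noncomputable def packingSum (T : X → X) (s : ℝ) (N : ℕ) (ε : ℝ) (Z : Set X) : ℝ≥0∞ :=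
  ⨆ (F : Set (X × ℕ)) (_ : F.Countable) (_ : ∀ p ∈ F, p.1 ∈ Z ∧ N ≤ p.2)
    (_ : F.PairwiseDisjoint fun p => bowenClosedBall T p.2 p.1 ε),
    ∑' p : F, ENNReal.ofReal (Real.exp (-s * ((p : X × ℕ).2 : ℝ)))

/-- `P^s_ε(Z) = lim_{N → ∞} P^s_{N,ε}(Z)`; the limit exists and equals the infimum
since `P^s_{N,ε}(Z)` does not increase as `N` increases. -/
noncomputable def packingPre (T : X → X) (s ε : ℝ) (Z : Set X) : ℝ≥0∞ :=
  ⨅ N : ℕ, packingSum T s N ε Z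

/-- `𝒫^s_ε(Z) = inf { Σ_{i=1}^∞ P^s_ε(Z_i) : ∪_{i=1}^∞ Z_i ⊇ Z }`. -/
noncomputable def packingMeasureEps (T : X → X) (s ε : ℝ) (Z : Set X) : ℝ≥0∞ :=
  ⨅ (Zs : ℕ → Set X) (_ : Z ⊆ ⋃ i, Zs i), ∑' i, packingPre T s ε (Zs i)

/-- `h^P(Z, ε)`: the critical value of `s ≥ 0` at which `𝒫^s_ε(Z)` jumps from `∞` to `0`. -/
noncomputable def packingEntropyEps (T : X → X) (ε : ℝ) (Z : Set X) : ℝ≥0∞ :=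
  ⨅ (s : ℝ≥0) (_ : packingMeasureEps T (s : ℝ) ε Z = 0), (s : ℝ≥0∞)

/-- The packing topological entropy `h^P(Z) = lim_{ε → 0} h^P(Z, ε)`; the limit exists and
equals the supremum since `h^P(Z,ε)` increases as `ε` decreases. -/
noncomputable def packingEntropy (T : X → X) (Z : Set X) : ℝ≥0∞ :=
  ⨆ (ε : ℝ) (_ : 0 < ε), packingEntropyEps T ε Z

/-- `r_n(Z, ε)`: the largest cardinality of an `(n,ε)`-separated subset `E ⊆ Z`, i.e. a set in
which distinct points are at Bowen `d_n`-distance `> ε`. -/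
noncomputable def maxSep (T : X → X) (Z : Set X) (n : ℕ) (ε : ℝ) : ℕ :=
  sSup {k : ℕ | ∃ E : Finset X, ↑E ⊆ Z ∧
    (∀ x ∈ E, ∀ y ∈ E, x ≠ y → ∃ i < n, ε < dist (T^[i] x) (T^[i] y)) ∧ E.card = k}

/-- The upper capacity topological entropy
`h^U(Z) = lim_{ε → 0} limsup_{n → ∞} (1/n) log r_n(Z, ε)`; the limit over `ε` equals the
supremum by monotonicity. -/
noncomputable def upperCapacityEntropy (T : X → X) (Z : Set X) : ℝ≥0∞ :=
  ⨆ (ε : ℝ) (_ : 0 < ε),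
    Filter.atTop.limsup fun n : ℕ => ENNReal.ofReal (Real.log (maxSep T Z n ε) / n)

end BowenProduct

lemma ENNReal.le_add_of_forall_nnreal_lt {a b c : ℝ≥0∞}
    (h : ∀ s t : ℝ≥0, a < s → b < t → c ≤ s + t) : c ≤ a + b := by
  refine le_of_forall_gt fun r hr => ?_
  obtain ⟨a', ha, b', hb, hr⟩ := ENNReal.exists_add_lt_of_add_lt hr
  obtain ⟨s, has, hsa'⟩ := ENNReal.lt_iff_exists_nnreal_btwn.1 ha
  obtain ⟨t, hbt, htb'⟩ := ENNReal.lt_iff_exists_nnreal_btwn.1 hb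
  exact (h s t has hbt).trans_lt ((ENNReal.add_lt_add hsa' htb').trans hr)

namespace BowenProduct

open Dynamics UniformSpace
open scoped SetRel

lemma eq_zero_of_critical_lt {μ : ℝ → ℝ≥0∞} (hμ : Antitone μ) {c : ℝ≥0}
    (h : ⨅ (s : ℝ≥0) (_ : μ s = 0), (s : ℝ≥0∞) < c) : μ c = 0 := by
  obtain ⟨s, hs, hsc⟩ := by simpa only [iInf_lt_iff, exists_prop] using h
  exact nonpos_iff_eq_zero.1 (hs ▸ hμ (by exact_mod_cast hsc.le))

lemma ofReal_exp_neg_mul_anti {s s' : ℝ} (h : s ≤ s') (n : ℕ) :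
    ENNReal.ofReal (Real.exp (-s' * n)) ≤ ENNReal.ofReal (Real.exp (-s * n)) :=
  ENNReal.ofReal_le_ofReal <| Real.exp_le_exp.2 <| by nlinarith [(n.cast_nonneg : (0 : ℝ) ≤ n)]

lemma ofReal_exp_neg_add_mul (s t : ℝ) (n : ℕ) :
    ENNReal.ofReal (Real.exp (-(s + t) * n)) =
      ENNReal.ofReal (Real.exp (-s * n)) * ENNReal.ofReal (Real.exp (-t * n)) := by
  rw [← ENNReal.ofReal_mul (Real.exp_pos _).le, ← Real.exp_add]
  ring_nf

variable {X Y : Type*} [PseudoMetricSpace X] [PseudoMetricSpace Y] {T : X → X} {S : Y → Y}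

lemma bowenBall_prodMap (n : ℕ) (x : X) (y : Y) (ε : ℝ) :
    bowenBall (Prod.map T S) n (x, y) ε = bowenBall T n x ε ×ˢ bowenBall S n y ε := by
  ext ⟨a, b⟩
  simp only [bowenBall, mem_ofPred_eq, mem_prod, Prod.map_iterate, Prod.map_apply,
    Prod.dist_eq, max_lt_iff]
  exact ⟨fun h => ⟨fun k hk => (h k hk).1, fun k hk => (h k hk).2⟩,
    fun h k hk => ⟨h.1 k hk, h.2 k hk⟩⟩

lemma ball_dynEntourage_edist_le (n : ℕ) (x : X) (r : ℝ≥0) :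
    ball x (dynEntourage T ({(x, y) | edist x y ≤ r} : Set (X × X)) n) =
      bowenClosedBall T n x r := by
  ext y
  rw [mem_ball_dynEntourage]
  simp only [bowenClosedBall, ball, mem_preimage, mem_ofPred_eq,
    edist_le_coe, ← NNReal.coe_le_coe, coe_nndist]

lemma coverSum_le_tsum {s : ℝ} {N : ℕ} {ε : ℝ} {Z : Set X} {F : Set (X × ℕ)}
    (hF : F.Countable) (hN : ∀ p ∈ F, N ≤ p.2) (hZ : Z ⊆ ⋃ p ∈ F, bowenBall T p.2 p.1 ε) :
    coverSum T s N ε Z ≤ ∑' p : F, ENNReal.ofReal (Real.exp (-s * ((p : X × ℕ).2 : ℝ))) :=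
  iInf₂_le_of_le F hF <| iInf₂_le_of_le hN hZ le_rfl

lemma coverSum_mono {s : ℝ} {N N' : ℕ} {ε : ℝ} {Z Z' : Set X} (hN : N ≤ N') (hZ : Z ⊆ Z') :
    coverSum T s N ε Z ≤ coverSum T s N' ε Z' :=
  le_iInf₂ fun _ hF => le_iInf₂ fun hN' hZ' =>
    coverSum_le_tsum hF (fun p hp => hN.trans (hN' p hp)) (hZ.trans hZ')

lemma coverSum_anti_exponent {s s' : ℝ} (h : s ≤ s') (N : ℕ) (ε : ℝ) (Z : Set X) :
    coverSum T s' N ε Z ≤ coverSum T s N ε Z :=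
  iInf₂_mono fun _ _ => iInf₂_mono fun _ _ =>
    ENNReal.tsum_le_tsum fun _ => ofReal_exp_neg_mul_anti h _

lemma coverSum_iUnion_le {ι : Type*} [Countable ι] (s : ℝ) (N : ℕ) (ε : ℝ) (Z : ι → Set X) :
    coverSum T s N ε (⋃ i, Z i) ≤ ∑' i, coverSum T s N ε (Z i) := by
  refine ENNReal.le_of_forall_pos_le_add fun δ hδ hfin => ?_
  obtain ⟨η, hη, hηδ⟩ := ENNReal.exists_pos_sum_of_countable (ENNReal.coe_ne_zero.2 hδ.ne') ι
  have hcover : ∀ i, ∃ F : Set (X × ℕ), F.Countable ∧ (∀ p ∈ F, N ≤ p.2) ∧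
      Z i ⊆ (⋃ p ∈ F, bowenBall T p.2 p.1 ε) ∧
      ∑' p : F, ENNReal.ofReal (Real.exp (-s * ((p : X × ℕ).2 : ℝ))) <
        coverSum T s N ε (Z i) + η i := by
    intro i
    have hi : coverSum T s N ε (Z i) ≠ ⊤ :=
      ENNReal.ne_top_of_tsum_ne_top hfin.ne i
    simpa only [coverSum, iInf_lt_iff, exists_prop] using
      ENNReal.lt_add_right hi (ENNReal.coe_ne_zero.2 (hη i).ne')
  choose F hF hFN hFZ hFsum using hcover
  calc coverSum T s N ε (⋃ i, Z i)
      ≤ ∑' p : ⋃ i, F i, ENNReal.ofReal (Real.exp (-s * ((p : X × ℕ).2 : ℝ))) := by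
        refine coverSum_le_tsum (countable_iUnion hF) (fun p hp => by
          obtain ⟨i, hi⟩ := mem_iUnion.1 hp; exact hFN i p hi) ?_
        refine iUnion_subset fun i => (hFZ i).trans ?_
        exact biUnion_subset_biUnion_left (subset_iUnion F i)
    _ ≤ ∑' i, ∑' p : F i, ENNReal.ofReal (Real.exp (-s * ((p : X × ℕ).2 : ℝ))) :=
        ENNReal.tsum_iUnion_le_tsum (fun p : X × ℕ => ENNReal.ofReal (Real.exp (-s * p.2))) F
    _ ≤ ∑' i, (coverSum T s N ε (Z i) + η i) := ENNReal.tsum_le_tsum fun i => (hFsum i).le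
    _ ≤ ∑' i, coverSum T s N ε (Z i) + δ := by
        rw [ENNReal.tsum_add]
        gcongr

lemma coverMeasure_eq_zero_iff {s : ℝ} {Z : Set X} :
    coverMeasure T s Z = 0 ↔ ∀ ε > 0, ∀ N, coverSum T s N ε Z = 0 := by
  simp [coverMeasure, coverMeasureEps]

lemma coverMeasure_antitone (Z : Set X) : Antitone fun s => coverMeasure T s Z :=
  fun _ _ h => iSup₂_mono fun ε _ => iSup_mono fun N => coverSum_anti_exponent h N ε Z

lemma coverMeasure_eq_zero_of_bowenEntropy_lt {Z : Set X} {s : ℝ≥0}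
    (h : bowenEntropy T Z < s) : coverMeasure T s Z = 0 :=
  eq_zero_of_critical_lt (coverMeasure_antitone Z) h

lemma packingSum_anti_exponent {t t' : ℝ} (h : t ≤ t') (N : ℕ) (ε : ℝ) (Z : Set X) :
    packingSum T t' N ε Z ≤ packingSum T t N ε Z :=
  iSup₂_mono fun _ _ => iSup₂_mono fun _ _ =>
    ENNReal.tsum_le_tsum fun _ => ofReal_exp_neg_mul_anti h _

lemma packingMeasureEps_antitone (ε : ℝ) (Z : Set X) :
    Antitone fun t => packingMeasureEps T t ε Z :=
  fun _ _ h => iInf₂_mono fun _ _ => ENNReal.tsum_le_tsum fun _ =>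
    iInf_mono fun N => packingSum_anti_exponent h N ε _

lemma packingMeasureEps_eq_zero_of_packingEntropy_lt {Z : Set X} {t : ℝ≥0} {ε : ℝ}
    (hε : 0 < ε) (h : packingEntropy T Z < t) : packingMeasureEps T t ε Z = 0 :=
  eq_zero_of_critical_lt (packingMeasureEps_antitone ε Z) <|
    (le_iSup₂ (f := fun ε (_ : 0 < ε) => packingEntropyEps T ε Z) ε hε).trans_lt h

lemma card_mul_le_packingSum_of_isDynNetIn {A : Set X} {r : ℝ≥0} {M n : ℕ} {E : Finset X}
    (hE : IsDynNetIn T A ({(x, y) | edist x y ≤ r} : Set (X × X)) n E) (hn : M ≤ n) (t : ℝ) :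
    E.card * ENNReal.ofReal (Real.exp (-t * n)) ≤ packingSum T t M r A := by
  classical
  have hinj : Function.Injective fun y : X => (y, n) := fun _ _ h => congrArg Prod.fst h
  refine le_iSup₂_of_le (↑(E.image fun y => (y, n)) : Set (X × ℕ)) (Finset.countable_toSet _) <|
    le_iSup₂_of_le ?_ ?_ ?_
  · simpa using fun y hy => ⟨hE.1 hy, hn⟩
  · rw [Finset.coe_image, hinj.injOn.pairwiseDisjoint_image]
    simpa only [Function.comp_def, ball_dynEntourage_edist_le] using hE.2
  · rw [Finset.tsum_subtype' _ fun p : X × ℕ => ENNReal.ofReal (Real.exp (-t * p.2)),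
      Finset.sum_image hinj.injOn]
    simp

lemma netMaxcard_lt_top_of_packingSum_ne_top {A : Set X} {r : ℝ≥0} {t : ℝ} {M n : ℕ}
    (hn : M ≤ n) (h : packingSum T t M r A ≠ ⊤) :
    netMaxcard T A ({(x, y) | edist x y ≤ r} : Set (X × X)) n < ⊤ := by
  refine lt_top_iff_ne_top.2 fun htop => ?_
  obtain ⟨k, -, hk⟩ :=
    ENNReal.exists_nat_pos_mul_gt (ENNReal.ofReal_pos.2 (Real.exp_pos (-t * n))).ne' h
  obtain ⟨E, hE, hkE⟩ := (netMaxcard_infinite_iff T A _ n).1 htop k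
  exact hk.not_ge <| (mul_le_mul_left (Nat.cast_le.2 hkE) _).trans
    (card_mul_le_packingSum_of_isDynNetIn hE hn t)

/-- The cover is no larger than a maximal `(n, r)`-net, whose closed Bowen `r`-balls form a
packing. -/
lemma exists_finset_cover_card_mul_le_packingSum {A : Set X} {r : ℝ≥0} {ε t : ℝ} {M n : ℕ}
    (hr : 2 * r < ε) (hn : M ≤ n) (h : packingSum T t M r A ≠ ⊤) :
    ∃ E : Finset X, A ⊆ (⋃ y ∈ E, bowenBall T n y ε) ∧
      E.card * ENNReal.ofReal (Real.exp (-t * n)) ≤ packingSum T t M r A := by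
  set U : SetRel X X := {(x, y) | edist x y ≤ r}
  have hfin := netMaxcard_lt_top_of_packingSum_ne_top hn h
  obtain ⟨s, hs, hs_card⟩ := (netMaxcard_finite_iff T A U n).1 hfin
  obtain ⟨E, hE, hE_card⟩ := (coverMincard_finite_iff T A (U ○ U) n).1
    ((coverMincard_le_netMaxcard T A n).trans_lt hfin)
  refine ⟨E, fun x hx => ?_, ?_⟩
  · obtain ⟨y, hy, hxy⟩ := hE hx
    refine mem_biUnion hy fun k hk => ?_
    obtain ⟨z, hxz, hzy⟩ := mem_dynEntourage.1 hxy k hk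
    simp only [U, mem_ofPred_eq, edist_le_coe, ← NNReal.coe_le_coe, coe_nndist] at hxz hzy
    calc dist (T^[k] y) (T^[k] x) ≤ dist (T^[k] x) z + dist z (T^[k] y) := by
          rw [dist_comm]; exact dist_triangle _ _ _
      _ ≤ 2 * r := by linarith
      _ < ε := hr
  · have hcard : E.card ≤ s.card := by
      exact_mod_cast hE_card.trans_le ((coverMincard_le_netMaxcard T A n).trans hs_card.ge)
    exact (mul_le_mul_left (Nat.cast_le.2 hcard) _).trans
      (card_mul_le_packingSum_of_isDynNetIn hs hn t)

lemma coverSum_bowenBall_prod_le {s ε : ℝ} {N n : ℕ} (hn : N ≤ n) (x : X) {B : Set Y}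
    {E : Finset Y} (hB : B ⊆ ⋃ y ∈ E, bowenBall S n y ε) :
    coverSum (Prod.map T S) s N ε (bowenBall T n x ε ×ˢ B) ≤
      E.card * ENNReal.ofReal (Real.exp (-s * n)) := by
  classical
  have hinj : Function.Injective fun y : Y => ((x, y), n) := fun _ _ h => by simpa using h
  calc coverSum (Prod.map T S) s N ε (bowenBall T n x ε ×ˢ B)
      ≤ ∑' q : ((E.image fun y => ((x, y), n) : Finset _) : Set ((X × Y) × ℕ)),
          ENNReal.ofReal (Real.exp (-s * ((q : (X × Y) × ℕ).2 : ℝ))) := by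
        refine coverSum_le_tsum (Finset.countable_toSet _) (by simpa using fun _ _ => hn) ?_
        rintro ⟨a, b⟩ ⟨ha, hb⟩
        obtain ⟨y, hy, hby⟩ := mem_iUnion₂.1 (hB hb)
        refine mem_biUnion (Finset.mem_coe.2 (Finset.mem_image_of_mem _ hy)) ?_
        rw [bowenBall_prodMap]
        exact ⟨ha, hby⟩
    _ = E.card * ENNReal.ofReal (Real.exp (-s * n)) := by
        rw [Finset.tsum_subtype' _ fun q : (X × Y) × ℕ => ENNReal.ofReal (Real.exp (-s * q.2)),
          Finset.sum_image hinj.injOn]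
        simp

lemma coverSum_prodMap_le {s t ε : ℝ} {N : ℕ} {A : Set X} {B : Set Y}
    (hB : ∀ n ≥ N, ∃ E : Finset Y, B ⊆ (⋃ y ∈ E, bowenBall S n y ε) ∧
      E.card * ENNReal.ofReal (Real.exp (-t * n)) ≤ 1) :
    coverSum (Prod.map T S) (s + t) N ε (A ×ˢ B) ≤ coverSum T s N ε A := by
  refine le_iInf₂ fun F hF => le_iInf₂ fun hFN hA => ?_
  have : Countable F := hF.to_subtype
  calc coverSum (Prod.map T S) (s + t) N ε (A ×ˢ B)
      ≤ coverSum (Prod.map T S) (s + t) N ε (⋃ p : F, bowenBall T p.1.2 p.1.1 ε ×ˢ B) := by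
        refine coverSum_mono le_rfl ?_
        rw [← iUnion_prod_const]
        exact prod_mono (by simpa only [biUnion_eq_iUnion] using hA) le_rfl
    _ ≤ ∑' p : F, coverSum (Prod.map T S) (s + t) N ε (bowenBall T p.1.2 p.1.1 ε ×ˢ B) :=
        coverSum_iUnion_le _ _ _ _
    _ ≤ ∑' p : F, ENNReal.ofReal (Real.exp (-s * ((p : X × ℕ).2 : ℝ))) :=
        ENNReal.tsum_le_tsum fun p => ?_
  obtain ⟨E, hE, hcard⟩ := hB p.1.2 (hFN p p.2)
  calc coverSum (Prod.map T S) (s + t) N ε (bowenBall T p.1.2 p.1.1 ε ×ˢ B)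
      ≤ E.card * ENNReal.ofReal (Real.exp (-(s + t) * p.1.2)) :=
        coverSum_bowenBall_prod_le (hFN p p.2) _ hE
    _ = ENNReal.ofReal (Real.exp (-s * p.1.2)) *
          (E.card * ENNReal.ofReal (Real.exp (-t * p.1.2))) := by
        rw [ofReal_exp_neg_add_mul]; ring
    _ ≤ ENNReal.ofReal (Real.exp (-s * p.1.2)) := mul_le_of_le_one_right' hcard

lemma coverSum_prodMap_eq_zero {s t ε : ℝ} {r : ℝ≥0} (hr : 2 * r < ε) {Z₁ : Set X}
    {Z₂ : Set Y} (h₁ : ∀ N, coverSum T s N ε Z₁ = 0) (h₂ : packingMeasureEps S t r Z₂ < 1)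
    (N : ℕ) : coverSum (Prod.map T S) (s + t) N ε (Z₁ ×ˢ Z₂) = 0 := by
  obtain ⟨Zs, hZs, hsum⟩ :
      ∃ Zs : ℕ → Set Y, Z₂ ⊆ (⋃ i, Zs i) ∧ ∑' i, packingPre S t r (Zs i) < 1 := by
    simpa only [packingMeasureEps, iInf_lt_iff, exists_prop] using h₂
  have hM : ∀ i, ∃ M, packingSum S t M r (Zs i) < 1 := fun i =>
    iInf_lt_iff.1 ((ENNReal.le_tsum i).trans_lt hsum)
  choose M hM using hM
  have hcover : ∀ i, ∀ n ≥ max N (M i), ∃ E : Finset Y, Zs i ⊆ (⋃ y ∈ E, bowenBall S n y ε) ∧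
      E.card * ENNReal.ofReal (Real.exp (-t * n)) ≤ 1 := fun i n hn =>
    let ⟨E, hE, hcard⟩ :=
      exists_finset_cover_card_mul_le_packingSum hr (le_of_max_le_right hn) (hM i).ne_top
    ⟨E, hE, hcard.trans (hM i).le⟩
  refine nonpos_iff_eq_zero.1 ?_
  calc coverSum (Prod.map T S) (s + t) N ε (Z₁ ×ˢ Z₂)
      ≤ coverSum (Prod.map T S) (s + t) N ε (⋃ i, Z₁ ×ˢ Zs i) :=
        coverSum_mono le_rfl (by rw [← prod_iUnion]; exact prod_mono le_rfl hZs)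
    _ ≤ ∑' i, coverSum (Prod.map T S) (s + t) N ε (Z₁ ×ˢ Zs i) := coverSum_iUnion_le _ _ _ _
    _ ≤ ∑' i, coverSum (Prod.map T S) (s + t) (max N (M i)) ε (Z₁ ×ˢ Zs i) :=
        ENNReal.tsum_le_tsum fun i => coverSum_mono (le_max_left _ _) le_rfl
    _ ≤ ∑' i, coverSum T s (max N (M i)) ε Z₁ :=
        ENNReal.tsum_le_tsum fun i => coverSum_prodMap_le (hcover i)
    _ = 0 := by simp [h₁]

lemma coverMeasure_prodMap_eq_zero {s t : ℝ} {Z₁ : Set X} {Z₂ : Set Y}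
    (h₁ : coverMeasure T s Z₁ = 0) (h₂ : ∀ r : ℝ≥0, 0 < r → packingMeasureEps S t r Z₂ = 0) :
    coverMeasure (Prod.map T S) (s + t) (Z₁ ×ˢ Z₂) = 0 := by
  rw [coverMeasure_eq_zero_iff] at h₁ ⊢
  intro ε hε N
  have hr : 0 < (ε / 4).toNNReal := Real.toNNReal_pos.2 (by positivity)
  refine coverSum_prodMap_eq_zero ?_ (h₁ ε hε) ((h₂ _ hr).trans_lt one_pos) N
  rw [Real.coe_toNNReal _ (by positivity)]
  linarith

end BowenProduct

theorem BowenProduct.bowenEntropy_prod_le_add_packing_general {X : Type*} [MetricSpace X]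
    (T : X → X) (Z₁ Z₂ : Set X) :
    BowenProduct.bowenEntropy (Prod.map T T) (Z₁ ×ˢ Z₂) ≤
      BowenProduct.bowenEntropy T Z₁ + BowenProduct.packingEntropy T Z₂ := by
  open BowenProduct in
  refine ENNReal.le_add_of_forall_nnreal_lt fun s t hs ht => iInf₂_le (s + t) ?_
  rw [NNReal.coe_add]
  exact coverMeasure_prodMap_eq_zero (coverMeasure_eq_zero_of_bowenEntropy_lt hs)
    fun r hr => packingMeasureEps_eq_zero_of_packingEntropy_lt (by exact_mod_cast hr) ht

/-- Upper bound for Bowen entropy of a product via packing entropy (main theorem, part 2):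
`h^B(Z_1 × Z_2) ≤ h^B(Z_1) + h^P(Z_2)`, the product being taken in the product system
`(X × X, ρ, T × T)` with `ρ` the max product metric. -/
theorem BowenProduct.bowenEntropy_prod_le_add_packing {X : Type*} [MetricSpace X]
    [CompactSpace X] (T : X → X) (hT : Continuous T) (Z₁ Z₂ : Set X) :
    BowenProduct.bowenEntropy (Prod.map T T) (Z₁ ×ˢ Z₂) ≤
      BowenProduct.bowenEntropy T Z₁ + BowenProduct.packingEntropy T Z₂ :=
  BowenProduct.bowenEntropy_prod_le_add_packing_general T Z₁ Z₂
end

section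
/- Subadditivity of packing entropy under products: for any Z_1, Z_2 ⊆ X, h^P(Z_1 × Z_2) ≤ h^P(Z_1) + h^P(Z_2), where the product is taken in the product system. -/
open Filter Set
open scoped ENNReal NNReal

/-!
The level-`n` centres of a packing of `A × B` by closed Bowen balls of radius `ε` form an
`(n, ε)`-separated set `S`. Maximal `(n, ε/2)`-separated subsets `E₁`, `E₂` of its two projections
are `ε/2`-dense in them, and each box `B̄_n(e₁, ε/2) × B̄_n(e₂, ε/2)` contains at most one point of
`S`, so `#S ≤ #E₁ · #E₂`, while the balls of radius `ε/4` around `E₁` (resp. `E₂`) pack `A`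
(resp. `B`). Hence level `n` contributes at most `P^{s₁}_{N,ε/4}(A) P^{s₂}_{N,ε/4}(B) e^{-δn}` to
`P^{s₁+s₂+δ}_{N,ε}(A × B)`, and summing the geometric tail over `n ≥ N` gives
`P^{s₁+s₂+δ}_ε(A × B) = 0` as soon as both factors are finite. Pairing countable covers of `Z₁`
and `Z₂` then yields `h^P(Z₁ × Z₂, ε) ≤ h^P(Z₁, ε/4) + h^P(Z₂, ε/4)`.
-/

namespace BowenProduct

open scoped Topology

variable {X Y : Type*} [PseudoMetricSpace X] [PseudoMetricSpace Y]

def IsBowenSeparated (T : X → X) (n : ℕ) (r : ℝ) (E : Set X) : Prop :=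
  ∀ x ∈ E, ∀ y ∈ E, x ≠ y → ∃ k < n, r < dist (T^[k] x) (T^[k] y)

theorem IsBowenSeparated.mono {T : X → X} {n : ℕ} {r : ℝ} {E E' : Set X}
    (h : IsBowenSeparated T n r E) (hE' : E' ⊆ E) : IsBowenSeparated T n r E' :=
  fun x hx y hy hxy => h x (hE' hx) y (hE' hy) hxy

theorem mem_bowenClosedBall_self (T : X → X) (n : ℕ) (x : X) {ε : ℝ} (hε : 0 ≤ ε) :
    x ∈ bowenClosedBall T n x ε :=
  fun _ _ => (dist_self _).trans_le hε

theorem dist_iterate_le_of_mem_bowenClosedBall {T : X → X} {n : ℕ} {x y z : X} {ε : ℝ}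
    (hy : y ∈ bowenClosedBall T n x ε) (hz : z ∈ bowenClosedBall T n x ε) {k : ℕ} (hk : k < n) :
    dist (T^[k] y) (T^[k] z) ≤ 2 * ε := by
  linarith [dist_triangle_left (T^[k] y) (T^[k] z) (T^[k] x), hy k hk, hz k hk]

theorem bowenClosedBall_prodMap (T₁ : X → X) (T₂ : Y → Y) (n : ℕ) (x : X × Y) (ε : ℝ) :
    bowenClosedBall (Prod.map T₁ T₂) n x ε =
      bowenClosedBall T₁ n x.1 ε ×ˢ bowenClosedBall T₂ n x.2 ε := by
  ext y
  simp only [bowenClosedBall, Prod.map_iterate, Prod.dist_eq, Prod.map_fst, Prod.map_snd,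
    max_le_iff, mem_prod, mem_ofPred_eq, forall_and]

theorem IsBowenSeparated.pairwiseDisjoint {T : X → X} {n : ℕ} {ε : ℝ} {E : Set X}
    (h : IsBowenSeparated T n (2 * ε) E) :
    E.PairwiseDisjoint fun x => bowenClosedBall T n x ε := by
  intro x hx y hy hxy
  refine Set.disjoint_left.mpr fun z hzx hzy => ?_
  obtain ⟨k, hk, hlt⟩ := h x hx y hy hxy
  linarith [dist_triangle_right (T^[k] x) (T^[k] y) (T^[k] z), hzx k hk, hzy k hk]

theorem IsBowenSeparated.subsingleton_inter_bowenClosedBall {T : X → X} {n : ℕ} {ε : ℝ}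
    {E : Set X} (h : IsBowenSeparated T n (2 * ε) E) (x : X) :
    {y | y ∈ E ∧ y ∈ bowenClosedBall T n x ε}.Subsingleton := by
  rintro y ⟨hyE, hy⟩ z ⟨hzE, hz⟩
  by_contra hyz
  obtain ⟨k, hk, hlt⟩ := h y hyE z hzE hyz
  exact hlt.not_ge (dist_iterate_le_of_mem_bowenClosedBall hy hz hk)

theorem isBowenSeparated_of_pairwiseDisjoint {T : X → X} {ε : ℝ} (hε : 0 ≤ ε)
    {F : Set (X × ℕ)} (hF : F.PairwiseDisjoint fun p => bowenClosedBall T p.2 p.1 ε) (n : ℕ) :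
    IsBowenSeparated T n ε {x | (x, n) ∈ F} := by
  intro x hx y hy hxy
  have hy' : y ∉ bowenClosedBall T n x ε := Set.disjoint_right.mp
    (hF hx hy fun h => hxy (congrArg Prod.fst h)) (mem_bowenClosedBall_self T n y hε)
  simpa [bowenClosedBall] using hy'

theorem notMem_bowenClosedBall_iff {T : X → X} {n : ℕ} {x y : X} {ε : ℝ} :
    y ∉ bowenClosedBall T n x ε ↔ ∃ k < n, ε < dist (T^[k] x) (T^[k] y) := by
  simp [bowenClosedBall]

theorem IsBowenSeparated.insert {T : X → X} {n : ℕ} {ε : ℝ} {E : Set X} {a : X}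
    (h : IsBowenSeparated T n ε E) (ha : ∀ e ∈ E, a ∉ bowenClosedBall T n e ε) :
    IsBowenSeparated T n ε (insert a E) := by
  rintro x (rfl | hx) y (rfl | hy) hxy
  · exact absurd rfl hxy
  · simpa only [dist_comm] using notMem_bowenClosedBall_iff.mp (ha y hy)
  · exact notMem_bowenClosedBall_iff.mp (ha x hx)
  · exact h x hx y hy hxy

theorem exists_isBowenSeparated_subset_covering (T : X → X) (n : ℕ) {ε : ℝ} (hε : 0 ≤ ε)
    (S : Finset X) : ∃ E ⊆ S, IsBowenSeparated T n ε E ∧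
      ∀ x ∈ S, ∃ e ∈ E, x ∈ bowenClosedBall T n e ε := by
  classical
  induction S using Finset.induction_on with
  | empty => exact ⟨∅, subset_rfl, by simp [IsBowenSeparated], by simp⟩
  | insert a S _ ih =>
    obtain ⟨E, hES, hsep, hcov⟩ := ih
    by_cases ha : ∃ e ∈ E, a ∈ bowenClosedBall T n e ε
    · refine ⟨E, hES.trans (Finset.subset_insert a S), hsep, ?_⟩
      simpa [ha] using hcov
    · push Not at ha
      refine ⟨insert a E, Finset.insert_subset_insert a hES, ?_, ?_⟩
      · simpa using hsep.insert ha
      · simp only [Finset.mem_insert, forall_eq_or_imp, exists_eq_or_imp]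
        exact ⟨Or.inl (mem_bowenClosedBall_self T n a hε),
          fun x hx => (hcov x hx).elim fun e he => Or.inr ⟨e, he⟩⟩

theorem exists_card_le_mul_card_of_isBowenSeparated_prodMap {T₁ : X → X} {T₂ : Y → Y} {n : ℕ}
    {ε : ℝ} (hε : 0 ≤ ε) {A : Set X} {B : Set Y} {S : Finset (X × Y)} (hSAB : ↑S ⊆ A ×ˢ B)
    (hS : IsBowenSeparated (Prod.map T₁ T₂) n (2 * ε) S) :
    ∃ (E₁ : Finset X) (E₂ : Finset Y), ↑E₁ ⊆ A ∧ ↑E₂ ⊆ B ∧ IsBowenSeparated T₁ n ε E₁ ∧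
      IsBowenSeparated T₂ n ε E₂ ∧ S.card ≤ E₁.card * E₂.card := by
  classical
  obtain ⟨E₁, hE₁, hsep₁, hcov₁⟩ :=
    exists_isBowenSeparated_subset_covering T₁ n hε (S.image Prod.fst)
  obtain ⟨E₂, hE₂, hsep₂, hcov₂⟩ :=
    exists_isBowenSeparated_subset_covering T₂ n hε (S.image Prod.snd)
  refine ⟨E₁, E₂, ?_, ?_, hsep₁, hsep₂, ?_⟩
  · intro x hx
    obtain ⟨p, hp, rfl⟩ := Finset.mem_image.mp (hE₁ hx)
    exact (hSAB hp).1
  · intro y hy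
    obtain ⟨p, hp, rfl⟩ := Finset.mem_image.mp (hE₂ hy)
    exact (hSAB hp).2
  · rw [← Finset.card_product]
    refine Finset.card_le_card_of_forall_subsingleton
      (fun p e => p ∈ bowenClosedBall (Prod.map T₁ T₂) n e ε) (fun p hp => ?_)
      fun e _ => hS.subsingleton_inter_bowenClosedBall e
    obtain ⟨e₁, he₁, hp₁⟩ := hcov₁ p.1 (Finset.mem_image_of_mem _ hp)
    obtain ⟨e₂, he₂, hp₂⟩ := hcov₂ p.2 (Finset.mem_image_of_mem _ hp)
    exact ⟨(e₁, e₂), Finset.mem_product.mpr ⟨he₁, he₂⟩, by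
      rw [bowenClosedBall_prodMap]; exact ⟨hp₁, hp₂⟩⟩

theorem card_mul_le_packingSum {T : X → X} {s η : ℝ} {N n : ℕ} (hn : N ≤ n) {A : Set X}
    {E : Finset X} (hEA : ↑E ⊆ A) (hE : IsBowenSeparated T n (2 * η) E) :
    E.card * ENNReal.ofReal (Real.exp (-s * n)) ≤ packingSum T s N η A := by
  classical
  let F : Finset (X × ℕ) := E.image (·, n)
  have hinj : Set.InjOn (·, n) (E : Set X) := fun x _ y _ h => (Prod.mk.inj h).1
  have hF : ∀ p ∈ (F : Set (X × ℕ)), p.1 ∈ A ∧ N ≤ p.2 := by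
    simp only [F, Finset.coe_image, Set.forall_mem_image]
    exact fun x hx => ⟨hEA hx, hn⟩
  have hdisj : (F : Set (X × ℕ)).PairwiseDisjoint fun p => bowenClosedBall T p.2 p.1 η := by
    rw [Finset.coe_image, hinj.pairwiseDisjoint_image]
    exact hE.pairwiseDisjoint
  calc E.card * ENNReal.ofReal (Real.exp (-s * n))
      = ∑' p : (F : Set (X × ℕ)), ENNReal.ofReal (Real.exp (-s * ((p : X × ℕ).2 : ℝ))) := by
        rw [Finset.tsum_subtype' F fun p => ENNReal.ofReal (Real.exp (-s * (p.2 : ℝ))),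
          Finset.sum_image hinj]
        simp
    _ ≤ packingSum T s N η A :=
        le_iSup₂_of_le (F : Set (X × ℕ)) F.countable_toSet (le_iSup₂_of_le hF hdisj le_rfl)

theorem card_mul_le_packingSum_mul_packingSum {T₁ : X → X} {T₂ : Y → Y} {s₁ s₂ ε : ℝ}
    (hε : 0 ≤ ε) {N₁ N₂ n : ℕ} (hN₁ : N₁ ≤ n) (hN₂ : N₂ ≤ n) {A : Set X} {B : Set Y}
    {S : Finset (X × Y)} (hSAB : ↑S ⊆ A ×ˢ B) (hS : IsBowenSeparated (Prod.map T₁ T₂) n ε S) :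
    S.card * (ENNReal.ofReal (Real.exp (-s₁ * n)) * ENNReal.ofReal (Real.exp (-s₂ * n))) ≤
      packingSum T₁ s₁ N₁ (ε / 4) A * packingSum T₂ s₂ N₂ (ε / 4) B := by
  rw [show ε = 2 * (2 * (ε / 4)) by ring] at hS
  obtain ⟨E₁, E₂, hE₁A, hE₂B, hsep₁, hsep₂, hcard⟩ :=
    exists_card_le_mul_card_of_isBowenSeparated_prodMap (by positivity) hSAB hS
  calc (S.card : ℝ≥0∞) * (ENNReal.ofReal (Real.exp (-s₁ * n)) *
        ENNReal.ofReal (Real.exp (-s₂ * n)))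
      ≤ (E₁.card * E₂.card : ℕ) * (ENNReal.ofReal (Real.exp (-s₁ * n)) *
        ENNReal.ofReal (Real.exp (-s₂ * n))) := by gcongr
    _ = (E₁.card * ENNReal.ofReal (Real.exp (-s₁ * n))) *
          (E₂.card * ENNReal.ofReal (Real.exp (-s₂ * n))) := by push_cast; ring
    _ ≤ _ := mul_le_mul' (card_mul_le_packingSum hN₁ hE₁A hsep₁)
          (card_mul_le_packingSum hN₂ hE₂B hsep₂)

theorem sum_pow_le_pow_mul_inv_one_sub (r : ℝ≥0∞) {N : ℕ} {J : Finset ℕ}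
    (hJ : ∀ n ∈ J, N ≤ n) : ∑ n ∈ J, r ^ n ≤ r ^ N * (1 - r)⁻¹ := by
  obtain ⟨M, hM⟩ := J.exists_nat_subset_range
  calc ∑ n ∈ J, r ^ n ≤ ∑ n ∈ Finset.Ico N M, r ^ n :=
        Finset.sum_le_sum_of_subset fun n hn =>
          Finset.mem_Ico.mpr ⟨hJ n hn, Finset.mem_range.mp (hM hn)⟩
    _ = r ^ N * ∑ k ∈ Finset.range (M - N), r ^ k := by
        rw [Finset.sum_Ico_eq_sum_range, Finset.mul_sum]
        simp only [pow_add]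
    _ ≤ r ^ N * (1 - r)⁻¹ := by
        rw [← ENNReal.tsum_geometric]
        gcongr
        exact ENNReal.sum_le_tsum _

theorem ofReal_exp_neg_add_add_mul (s₁ s₂ δ : ℝ) (n : ℕ) :
    ENNReal.ofReal (Real.exp (-(s₁ + s₂ + δ) * n)) =
      ENNReal.ofReal (Real.exp (-s₁ * n)) * ENNReal.ofReal (Real.exp (-s₂ * n)) *
        ENNReal.ofReal (Real.exp (-δ)) ^ n := by
  rw [← ENNReal.ofReal_pow (Real.exp_nonneg _), ← ENNReal.ofReal_mul (Real.exp_nonneg _),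
    ← ENNReal.ofReal_mul (by positivity), ← Real.exp_nat_mul, ← Real.exp_add, ← Real.exp_add]
  ring_nf

theorem sum_le_of_pairwiseDisjoint_prodMap {T₁ : X → X} {T₂ : Y → Y} {s₁ s₂ δ ε : ℝ}
    (hε : 0 ≤ ε) {N₁ N₂ N : ℕ} (hN₁ : N₁ ≤ N) (hN₂ : N₂ ≤ N) {A : Set X} {B : Set Y}
    {G : Finset ((X × Y) × ℕ)} (hG : ∀ p ∈ G, p.1 ∈ A ×ˢ B ∧ N ≤ p.2)
    (hdisj : (G : Set ((X × Y) × ℕ)).PairwiseDisjoint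
      fun p => bowenClosedBall (Prod.map T₁ T₂) p.2 p.1 ε) :
    ∑ p ∈ G, ENNReal.ofReal (Real.exp (-(s₁ + s₂ + δ) * p.2)) ≤
      packingSum T₁ s₁ N₁ (ε / 4) A * packingSum T₂ s₂ N₂ (ε / 4) B *
        (ENNReal.ofReal (Real.exp (-δ)) ^ N * (1 - ENNReal.ofReal (Real.exp (-δ)))⁻¹) := by
  classical
  set C := packingSum T₁ s₁ N₁ (ε / 4) A * packingSum T₂ s₂ N₂ (ε / 4) B
  set r := ENNReal.ofReal (Real.exp (-δ))
  have hlevel : ∀ n ∈ G.image Prod.snd, {p ∈ G | p.2 = n}.card •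
      ENNReal.ofReal (Real.exp (-(s₁ + s₂ + δ) * n)) ≤ C * r ^ n := by
    intro n hn
    obtain ⟨q, hq, rfl⟩ := Finset.mem_image.mp hn
    set S := {p ∈ G | p.2 = q.2}.image Prod.fst
    have hcard : S.card = {p ∈ G | p.2 = q.2}.card := Finset.card_image_of_injOn
      fun p hp p' hp' h =>
        Prod.ext h ((Finset.mem_filter.mp hp).2.trans (Finset.mem_filter.mp hp').2.symm)
    have hSG : ∀ x ∈ S, (x, q.2) ∈ G := by
      intro x hx
      obtain ⟨p, hp, rfl⟩ := Finset.mem_image.mp hx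
      obtain ⟨hpG, hpq⟩ := Finset.mem_filter.mp hp
      rwa [← hpq]
    have hS : IsBowenSeparated (Prod.map T₁ T₂) q.2 ε S :=
      (isBowenSeparated_of_pairwiseDisjoint hε hdisj q.2).mono hSG
    rw [← hcard, nsmul_eq_mul, ofReal_exp_neg_add_add_mul, ← mul_assoc]
    exact mul_le_mul_left (card_mul_le_packingSum_mul_packingSum hε (hN₁.trans (hG q hq).2)
      (hN₂.trans (hG q hq).2) (fun x hx => (hG _ (hSG x hx)).1) hS) _
  calc ∑ p ∈ G, ENNReal.ofReal (Real.exp (-(s₁ + s₂ + δ) * p.2))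
      = ∑ n ∈ G.image Prod.snd, {p ∈ G | p.2 = n}.card •
          ENNReal.ofReal (Real.exp (-(s₁ + s₂ + δ) * n)) :=
        Finset.sum_comp (fun n : ℕ => ENNReal.ofReal (Real.exp (-(s₁ + s₂ + δ) * n))) Prod.snd
    _ ≤ ∑ n ∈ G.image Prod.snd, C * r ^ n := Finset.sum_le_sum hlevel
    _ ≤ C * (r ^ N * (1 - r)⁻¹) := by
        rw [← Finset.mul_sum]
        gcongr
        refine sum_pow_le_pow_mul_inv_one_sub r fun n hn => ?_
        obtain ⟨p, hp, rfl⟩ := Finset.mem_image.mp hn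
        exact (hG p hp).2

theorem packingSum_prodMap_le {T₁ : X → X} {T₂ : Y → Y} {s₁ s₂ δ ε : ℝ} (hε : 0 ≤ ε)
    {N₁ N₂ N : ℕ} (hN₁ : N₁ ≤ N) (hN₂ : N₂ ≤ N) (A : Set X) (B : Set Y) :
    packingSum (Prod.map T₁ T₂) (s₁ + s₂ + δ) N ε (A ×ˢ B) ≤
      packingSum T₁ s₁ N₁ (ε / 4) A * packingSum T₂ s₂ N₂ (ε / 4) B *
        (ENNReal.ofReal (Real.exp (-δ)) ^ N * (1 - ENNReal.ofReal (Real.exp (-δ)))⁻¹) := by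
  refine iSup₂_le fun F _ => iSup₂_le fun hF hdisj => ?_
  rw [ENNReal.tsum_eq_iSup_sum]
  refine iSup_le fun G => ?_
  have hGF : ∀ p ∈ G.map (Function.Embedding.subtype _), p ∈ F := by
    intro p hp
    obtain ⟨q, _, rfl⟩ := Finset.mem_map.mp hp
    exact q.2
  refine (Finset.sum_map G (Function.Embedding.subtype _)
    fun p => ENNReal.ofReal (Real.exp (-(s₁ + s₂ + δ) * p.2))).symm.trans_le ?_
  exact sum_le_of_pairwiseDisjoint_prodMap hε hN₁ hN₂ (fun p hp => hF p (hGF p hp))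
    (hdisj.subset hGF)

theorem packingPre_prodMap_eq_zero {T₁ : X → X} {T₂ : Y → Y} {s₁ s₂ δ ε : ℝ} (hδ : 0 < δ)
    (hε : 0 ≤ ε) {A : Set X} {B : Set Y} (hA : packingPre T₁ s₁ (ε / 4) A ≠ ⊤)
    (hB : packingPre T₂ s₂ (ε / 4) B ≠ ⊤) :
    packingPre (Prod.map T₁ T₂) (s₁ + s₂ + δ) ε (A ×ˢ B) = 0 := by
  obtain ⟨N₁, hN₁⟩ := iInf_lt_iff.mp hA.lt_top
  obtain ⟨N₂, hN₂⟩ := iInf_lt_iff.mp hB.lt_top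
  set C := packingSum T₁ s₁ N₁ (ε / 4) A * packingSum T₂ s₂ N₂ (ε / 4) B
  set r := ENNReal.ofReal (Real.exp (-δ))
  have hr : r < 1 := ENNReal.ofReal_lt_one.mpr (Real.exp_lt_one_iff.mpr (neg_neg_of_pos hδ))
  have hlim : Tendsto (fun N => C * (r ^ N * (1 - r)⁻¹)) atTop (𝓝 0) := by
    have := ENNReal.Tendsto.mul_const (ENNReal.tendsto_pow_atTop_nhds_zero_of_lt_one hr)
      (Or.inr (ENNReal.inv_ne_top.mpr (tsub_pos_of_lt hr).ne'))
    simpa using ENNReal.Tendsto.const_mul this (Or.inr (ENNReal.mul_ne_top hN₁.ne hN₂.ne))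
  refine le_antisymm (ge_of_tendsto hlim (eventually_atTop.mpr ⟨max N₁ N₂, fun N hN => ?_⟩))
    bot_le
  exact (iInf_le _ N).trans (packingSum_prodMap_le hε (le_of_max_le_left hN)
    (le_of_max_le_right hN) A B)

theorem packingMeasureEps_prodMap_eq_zero {T₁ : X → X} {T₂ : Y → Y} {s₁ s₂ δ ε : ℝ}
    (hδ : 0 < δ) (hε : 0 ≤ ε) {Z₁ : Set X} {Z₂ : Set Y}
    (h₁ : packingMeasureEps T₁ s₁ (ε / 4) Z₁ ≠ ⊤) (h₂ : packingMeasureEps T₂ s₂ (ε / 4) Z₂ ≠ ⊤) :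
    packingMeasureEps (Prod.map T₁ T₂) (s₁ + s₂ + δ) ε (Z₁ ×ˢ Z₂) = 0 := by
  obtain ⟨A, hA⟩ := iInf_lt_iff.mp h₁.lt_top
  obtain ⟨hZA, hAsum⟩ := iInf_lt_iff.mp hA
  obtain ⟨B, hB⟩ := iInf_lt_iff.mp h₂.lt_top
  obtain ⟨hZB, hBsum⟩ := iInf_lt_iff.mp hB
  have hcov : Z₁ ×ˢ Z₂ ⊆ ⋃ i, A (Nat.unpair i).1 ×ˢ B (Nat.unpair i).2 := by
    rintro ⟨x, y⟩ ⟨hx, hy⟩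
    obtain ⟨j, hj⟩ := mem_iUnion.mp (hZA hx)
    obtain ⟨k, hk⟩ := mem_iUnion.mp (hZB hy)
    exact mem_iUnion.mpr ⟨Nat.pair j k, by simpa [Nat.unpair_pair] using ⟨hj, hk⟩⟩
  refine nonpos_iff_eq_zero.mp (iInf₂_le_of_le _ hcov (ENNReal.tsum_eq_zero.mpr fun i => ?_).le)
  exact packingPre_prodMap_eq_zero hδ hε (ne_top_of_le_ne_top hAsum.ne (ENNReal.le_tsum _))
    (ne_top_of_le_ne_top hBsum.ne (ENNReal.le_tsum _))

theorem packingEntropyEps_prodMap_le (T₁ : X → X) (T₂ : Y → Y) {ε : ℝ} (hε : 0 ≤ ε)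
    (Z₁ : Set X) (Z₂ : Set Y) :
    packingEntropyEps (Prod.map T₁ T₂) ε (Z₁ ×ˢ Z₂) ≤
      packingEntropyEps T₁ (ε / 4) Z₁ + packingEntropyEps T₂ (ε / 4) Z₂ := by
  refine ENNReal.le_of_forall_pos_le_add fun δ hδ _ => ?_
  calc packingEntropyEps (Prod.map T₁ T₂) ε (Z₁ ×ˢ Z₂)
      ≤ ⨅ (s₁ : ℝ≥0) (_ : packingMeasureEps T₁ s₁ (ε / 4) Z₁ = 0)
          (s₂ : ℝ≥0) (_ : packingMeasureEps T₂ s₂ (ε / 4) Z₂ = 0),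
          ((s₁ + s₂ + δ : ℝ≥0) : ℝ≥0∞) := by
        refine le_iInf₂ fun s₁ h₁ => le_iInf₂ fun s₂ h₂ => iInf₂_le _ ?_
        push_cast
        exact packingMeasureEps_prodMap_eq_zero hδ hε (by simp [h₁]) (by simp [h₂])
    _ = _ := by
        simp_rw [packingEntropyEps, ENNReal.coe_add, ENNReal.iInf_add, ENNReal.add_iInf,
          ENNReal.iInf_add]

end BowenProduct

theorem BowenProduct.packingEntropy_prod_le_general {X : Type*} [MetricSpace X]
    (T : X → X) (Z₁ Z₂ : Set X) :
    BowenProduct.packingEntropy (Prod.map T T) (Z₁ ×ˢ Z₂) ≤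
      BowenProduct.packingEntropy T Z₁ + BowenProduct.packingEntropy T Z₂ := by
  refine iSup₂_le fun ε hε => (packingEntropyEps_prodMap_le T T hε.le Z₁ Z₂).trans ?_
  gcongr <;> exact le_iSup₂_of_le (ε / 4) (by positivity) le_rfl

/-- Subadditivity of packing entropy under products: `h^P(Z_1 × Z_2) ≤ h^P(Z_1) + h^P(Z_2)`,
the product being taken in the product system `(X × X, ρ, T × T)` with `ρ` the max product
metric. -/
theorem BowenProduct.packingEntropy_prod_le {X : Type*} [MetricSpace X] [CompactSpace X]
    (T : X → X) (hT : Continuous T) (Z₁ Z₂ : Set X) :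
    BowenProduct.packingEntropy (Prod.map T T) (Z₁ ×ˢ Z₂) ≤
      BowenProduct.packingEntropy T Z₁ + BowenProduct.packingEntropy T Z₂ :=
  BowenProduct.packingEntropy_prod_le_general T Z₁ Z₂
end
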